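/- Let m, d be positive natural numbers, let F : ℝ^m → Matrix (Fin m) (Fin d) ℝ be any function, n⁺ ∈ ℝ^d with n⁻ = −n⁺, u⁺, u⁻ ∈ ℝ^m, let θ be an invertible m×m real matrix, and let s⁺, s⁻ be real numbers with s⁺ + s⁻ ≠ 0. If τ⁺ = s⁺·θ and τ⁻ = s⁻·θ, then the unique solution of (τ⁺ + τ⁻)·û = τ⁺·u⁺ + τ⁻·u⁻ is the weighted average û = (s⁺·u⁺ + s⁻·u⁻)/(s⁺ + s⁻), and the corresponding HDG numerical flux seen from each side satisfies F(û)·n^± + τ^±·(u^± − û) = F(û)·n^± + (s⁺·s⁻/(s⁺ + s⁻))·θ·(u^± − u^∓). -/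

import Mathlib

/-! Both sides of the hybrid equation are `θ` applied to a vector, namely `(s⁺ + s⁻) û` and
`s⁺ u⁺ + s⁻ u⁻`, so invertibility of `θ` reduces it to a scalar equation. The flux identity
then comes from `u^± - û = (s^∓ / (s⁺ + s⁻)) (u^± - u^∓)`. -/

section WeightedAverage

variable {K V : Type*} [Field K] [AddCommGroup V] [Module K V]

theorem sub_inv_smul_add_smul {s t : K} (hs : s + t ≠ 0) (y z : V) :
    y - (s + t)⁻¹ • (s • y + t • z) = (t / (s + t)) • (y - z) := by
  match_scalars <;> field_simp
  ring

end WeightedAverage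

namespace Matrix

variable {K n : Type*} [Field K] [Fintype n]

theorem smul_add_smul_mulVec_eq_iff [DecidableEq n] {θ : Matrix n n K} (hθ : IsUnit θ)
    {s t : K} (hs : s + t ≠ 0) (x y z : n → K) :
    (s • θ + t • θ) *ᵥ x = (s • θ) *ᵥ y + (t • θ) *ᵥ z ↔
      x = (s + t)⁻¹ • (s • y + t • z) := by
  rw [← add_smul, smul_mulVec, smul_mulVec, smul_mulVec, ← mulVec_smul, ← mulVec_smul,
    ← mulVec_smul, ← mulVec_add, (mulVec_injective_iff_isUnit.2 hθ).eq_iff,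
    eq_inv_smul_iff₀ hs]

theorem smul_mulVec_sub_inv_smul_add_smul (θ : Matrix n n K) {s t : K} (hs : s + t ≠ 0)
    (y z : n → K) :
    (s • θ) *ᵥ (y - (s + t)⁻¹ • (s • y + t • z)) = (s * t / (s + t)) • θ *ᵥ (y - z) := by
  rw [sub_inv_smul_add_smul hs, smul_mulVec, mulVec_smul, smul_smul, mul_div_assoc]

end Matrix

theorem hdg_discontinuous_stabilisation_general
    (m d : ℕ)
    (F : (Fin m → ℝ) → Matrix (Fin m) (Fin d) ℝ)
    (nplus nminus : Fin d → ℝ)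
    (uplus uminus : Fin m → ℝ)
    (θ : Matrix (Fin m) (Fin m) ℝ) (hθ : IsUnit θ)
    (splus sminus : ℝ) (hs : splus + sminus ≠ 0)
    (τplus τminus : Matrix (Fin m) (Fin m) ℝ)
    (hp : τplus = splus • θ) (hmn : τminus = sminus • θ) :
    (∀ uhat : Fin m → ℝ,
      (τplus + τminus).mulVec uhat = τplus.mulVec uplus + τminus.mulVec uminus ↔
        uhat = (splus + sminus)⁻¹ • (splus • uplus + sminus • uminus)) ∧
    (∀ uhat : Fin m → ℝ,
      uhat = (splus + sminus)⁻¹ • (splus • uplus + sminus • uminus) →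
      ((F uhat).mulVec nplus + τplus.mulVec (uplus - uhat) =
        (F uhat).mulVec nplus +
          (splus * sminus / (splus + sminus)) • θ.mulVec (uplus - uminus)) ∧
      ((F uhat).mulVec nminus + τminus.mulVec (uminus - uhat) =
        (F uhat).mulVec nminus +
          (splus * sminus / (splus + sminus)) • θ.mulVec (uminus - uplus))) := by
  subst hp hmn
  refine ⟨fun uhat => Matrix.smul_add_smul_mulVec_eq_iff hθ hs uhat uplus uminus,
    fun uhat huhat => ?_⟩
  subst huhat
  have hminus := Matrix.smul_mulVec_sub_inv_smul_add_smul θ (add_comm splus sminus ▸ hs)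
    uminus uplus
  rw [add_comm sminus, add_comm (sminus • uminus), mul_comm sminus] at hminus
  rw [Matrix.smul_mulVec_sub_inv_smul_add_smul θ hs, hminus]
  exact ⟨rfl, rfl⟩

/-- Discontinuous stabilisation across the interface (`τ^± = s^± θ`):
the hybrid variable is the weighted average of the two states and the HDG
numerical flux reduces to the HLL-type form. -/
theorem hdg_discontinuous_stabilisation
    (m d : ℕ) (hm : 0 < m) (hd : 0 < d)
    (F : (Fin m → ℝ) → Matrix (Fin m) (Fin d) ℝ)
    (nplus nminus : Fin d → ℝ) (hn : nminus = -nplus)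
    (uplus uminus : Fin m → ℝ)
    (θ : Matrix (Fin m) (Fin m) ℝ) (hθ : IsUnit θ)
    (splus sminus : ℝ) (hs : splus + sminus ≠ 0)
    (τplus τminus : Matrix (Fin m) (Fin m) ℝ)
    (hp : τplus = splus • θ) (hmn : τminus = sminus • θ) :
    (∀ uhat : Fin m → ℝ,
      (τplus + τminus).mulVec uhat = τplus.mulVec uplus + τminus.mulVec uminus ↔
        uhat = (splus + sminus)⁻¹ • (splus • uplus + sminus • uminus)) ∧
    (∀ uhat : Fin m → ℝ,
      uhat = (splus + sminus)⁻¹ • (splus • uplus + sminus • uminus) →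
      ((F uhat).mulVec nplus + τplus.mulVec (uplus - uhat) =
        (F uhat).mulVec nplus +
          (splus * sminus / (splus + sminus)) • θ.mulVec (uplus - uminus)) ∧
      ((F uhat).mulVec nminus + τminus.mulVec (uminus - uhat) =
        (F uhat).mulVec nminus +
          (splus * sminus / (splus + sminus)) • θ.mulVec (uminus - uplus))) :=
  hdg_discontinuous_stabilisation_general m d F nplus nminus uplus uminus θ hθ splus sminus hs τplus
    τminus hp hmn
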